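/- Let s ∈ [0,1), C, R > 0, and suppose |a_k| ≤ C (k!)^s / R^k for all k. Then for every m ≥ 0 and x ∈ [−L, L], the m-th derivative of f(x) = Σ_{k≥0} a_k x^k/k! satisfies |f^(m)(x)| ≤ C · (2^s/R)^m · (m!)^s · Σ_{k≥0} (2^s L / R)^k / (k!)^(1−s). -/

import Mathlib

/-!
Splitting `(k + m)! ≤ 2 ^ (k + m) k! m!` shows that the shifted coefficients `a (· + m)` obey the
same Gevrey bound with `C` replaced by `C (2 ^ s / R) ^ m (m!) ^ s` and `R` by `R / 2 ^ s`. Such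
coefficients define an entire function which may be differentiated term by term, so the `m`-th
derivative of `f` is the series with coefficients `a (· + m)`. Comparing its terms with
`(2 ^ s L / R) ^ k / (k!) ^ (1 - s)`, a series that converges because `s < 1`, gives the bound.
-/

open Real Set Filter
open scoped Nat

theorem Nat.factorial_add_le_two_pow_mul (k m : ℕ) : (k + m)! ≤ 2 ^ (k + m) * (k ! * m !) := by
  rw [← Nat.add_choose_mul_factorial_mul_factorial, mul_assoc]
  exact Nat.mul_le_mul_right _ (Nat.choose_le_two_pow _ _)

theorem Nat.cast_succ_mul_div_factorial_succ {K : Type*} [Field K] [CharZero K] (k : ℕ) (y : K) :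
    ((k + 1 : ℕ) : K) * y / ((k + 1)! : K) = y / k ! := by
  rw [Nat.factorial_succ, Nat.cast_mul, mul_div_mul_left _ _ (Nat.cast_ne_zero.mpr k.succ_ne_zero)]

theorem summable_pow_div_factorial_rpow {t : ℝ} (ht : 0 < t) (x : ℝ) :
    Summable fun k : ℕ => x ^ k / (k ! : ℝ) ^ t := by
  refine summable_of_ratio_norm_eventually_le (r := 1 / 2) (by norm_num) ?_
  have hgrowth : Tendsto (fun n : ℕ => ((n + 1 : ℕ) : ℝ) ^ t) atTop atTop :=
    (tendsto_rpow_atTop ht).comp (tendsto_natCast_atTop_atTop.comp (tendsto_add_atTop_nat 1))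
  filter_upwards [hgrowth.eventually_ge_atTop (2 * |x|)] with n hn
  have hpos : (0 : ℝ) < ((n + 1 : ℕ) : ℝ) ^ t := by positivity
  have hfact : ((n + 1)! : ℝ) ^ t = ((n + 1 : ℕ) : ℝ) ^ t * (n ! : ℝ) ^ t := by
    rw [Nat.factorial_succ, Nat.cast_mul, mul_rpow (by positivity) (by positivity)]
  simp only [norm_div, norm_pow, Real.norm_eq_abs,
    abs_of_nonneg (rpow_nonneg (Nat.cast_nonneg _) _)]
  calc |x| ^ (n + 1) / ((n + 1)! : ℝ) ^ t
      = |x| ^ n / (n ! : ℝ) ^ t * (|x| / ((n + 1 : ℕ) : ℝ) ^ t) := by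
        rw [hfact, pow_succ]
        ring
    _ ≤ |x| ^ n / (n ! : ℝ) ^ t * (1 / 2) := by
        refine mul_le_mul_of_nonneg_left ?_ (by positivity)
        rw [div_le_iff₀ hpos]
        linarith
    _ = 1 / 2 * (|x| ^ n / (n ! : ℝ) ^ t) := mul_comm _ _

theorem hasDerivAt_tsum_mul_pow_div_factorial {b : ℕ → ℂ}
    (hb : ∀ r : ℝ, 0 ≤ r → Summable fun k => ‖b (k + 1)‖ * r ^ k / k !) (x : ℝ) :
    HasDerivAt (fun y : ℝ => ∑' k, b k * (y : ℂ) ^ k / (k ! : ℂ))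
      (∑' k, b (k + 1) * (x : ℂ) ^ k / (k ! : ℂ)) x := by
  set r := |x| + 1
  have hr : 0 < r := add_pos_of_nonneg_of_pos (abs_nonneg x) one_pos
  have hx : x ∈ Ioo (-r) r := abs_lt.mp (lt_add_one |x|)
  have h0 : (0 : ℝ) ∈ Ioo (-r) r := ⟨neg_lt_zero.mpr hr, hr⟩
  have hderiv (n : ℕ) (y : ℝ) : HasDerivAt (fun y : ℝ => b n * (y : ℂ) ^ n / (n ! : ℂ))
      (b n * (n * (y : ℂ) ^ (n - 1)) / (n ! : ℂ)) y :=
    ((hasDerivAt_pow n (y : ℂ)).comp_ofReal.const_mul (b n)).div_const _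
  have hbound (n : ℕ) (y : ℝ) (hy : y ∈ Ioo (-r) r) :
      ‖b n * (n * (y : ℂ) ^ (n - 1)) / (n ! : ℂ)‖ ≤ ‖b n‖ * (n * r ^ (n - 1)) / n ! := by
    simp only [norm_div, norm_mul, norm_pow, Complex.norm_natCast, Complex.norm_real,
      Real.norm_eq_abs]
    gcongr
    exact (abs_lt.mpr hy).le
  have hmajorant : Summable fun n => ‖b n‖ * (n * r ^ (n - 1)) / n ! := by
    refine (summable_nat_add_iff 1).mp ((hb r hr.le).congr fun n => ?_)
    rw [Nat.add_sub_cancel, mul_left_comm, Nat.cast_succ_mul_div_factorial_succ]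
  -- convergence is needed at one point only, and at `0` the series has a single nonzero term
  have hsum0 : Summable fun n => b n * ((0 : ℝ) : ℂ) ^ n / (n ! : ℂ) := by
    refine summable_of_ne_finset_zero (s := {0}) fun n hn => ?_
    simp [zero_pow (Finset.notMem_singleton.mp hn)]
  refine (hasDerivAt_tsum_of_isPreconnected hmajorant isOpen_Ioo isPreconnected_Ioo
    (fun n y _ => hderiv n y) hbound h0 hsum0 hx).congr_deriv ?_
  rw [(Summable.of_norm_bounded hmajorant fun n => hbound n x hx).tsum_eq_zero_add]
  simp only [CharP.cast_eq_zero, zero_mul, mul_zero, zero_div, zero_add, Nat.add_sub_cancel]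
  refine tsum_congr fun k => ?_
  rw [mul_left_comm, Nat.cast_succ_mul_div_factorial_succ]

theorem iteratedDeriv_tsum_mul_pow_div_factorial {a : ℕ → ℂ}
    (ha : ∀ m : ℕ, ∀ r : ℝ, 0 ≤ r → Summable fun k => ‖a (k + m)‖ * r ^ k / k !) (m : ℕ) :
    iteratedDeriv m (fun x : ℝ => ∑' k, a k * (x : ℂ) ^ k / (k ! : ℂ)) =
      fun x : ℝ => ∑' k, a (k + m) * (x : ℂ) ^ k / (k ! : ℂ) := by
  induction m with
  | zero => simp
  | succ m ih =>
    funext x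
    have hb (r : ℝ) (hr : 0 ≤ r) : Summable fun k => ‖a (k + 1 + m)‖ * r ^ k / k ! := by
      simpa only [add_assoc, add_comm 1 m] using ha (m + 1) r hr
    rw [iteratedDeriv_succ, ih,
      (hasDerivAt_tsum_mul_pow_div_factorial (b := fun k => a (k + m)) hb x).deriv]
    simp only [add_assoc, add_comm 1 m]

def GevreyBound (s C R : ℝ) (a : ℕ → ℂ) : Prop :=
  ∀ k : ℕ, ‖a k‖ ≤ C * (k ! : ℝ) ^ s / R ^ k

namespace GevreyBound

variable {s C R : ℝ} {a : ℕ → ℂ}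

theorem nonneg (h : GevreyBound s C R a) : 0 ≤ C := by
  simpa using (norm_nonneg _).trans (h 0)

theorem shift (hs : 0 ≤ s) (hR : 0 < R) (h : GevreyBound s C R a) (m : ℕ) :
    GevreyBound s (C * (2 ^ s / R) ^ m * (m ! : ℝ) ^ s) (R / 2 ^ s) fun k => a (k + m) := by
  intro k
  have hfact : ((k + m)! : ℝ) ^ s ≤ (2 ^ s) ^ (k + m) * ((k ! : ℝ) ^ s * (m ! : ℝ) ^ s) := by
    calc ((k + m)! : ℝ) ^ s ≤ ((2 ^ (k + m) * (k ! * m !) : ℕ) : ℝ) ^ s := by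
          gcongr
          exact_mod_cast Nat.factorial_add_le_two_pow_mul k m
      _ = _ := by
          push_cast
          rw [mul_rpow (by positivity) (by positivity), mul_rpow (by positivity) (by positivity),
            ← rpow_pow_comm zero_le_two]
  calc ‖a (k + m)‖ ≤ C * ((k + m)! : ℝ) ^ s / R ^ (k + m) := h (k + m)
    _ ≤ C * ((2 ^ s) ^ (k + m) * ((k ! : ℝ) ^ s * (m ! : ℝ) ^ s)) / R ^ (k + m) := by
        gcongr
        exact h.nonneg
    _ = _ := by
        rw [div_pow, div_pow, pow_add, pow_add]
        field_simp

theorem norm_mul_pow_div_factorial_le (h : GevreyBound s C R a) (k : ℕ) {r : ℝ} (hr : 0 ≤ r) :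
    ‖a k‖ * r ^ k / k ! ≤ C * ((r / R) ^ k / (k ! : ℝ) ^ (1 - s)) := by
  have hk : (0 : ℝ) < k ! := by positivity
  calc ‖a k‖ * r ^ k / k ! ≤ C * (k ! : ℝ) ^ s / R ^ k * r ^ k / k ! := by
        gcongr
        exact h k
    _ = _ := by
        rw [rpow_sub hk, rpow_one, div_pow, div_div_eq_mul_div]
        ring

theorem summable_norm_mul_pow_div_factorial (hs : s < 1) (h : GevreyBound s C R a) {r : ℝ}
    (hr : 0 ≤ r) : Summable fun k => ‖a k‖ * r ^ k / k ! :=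
  .of_nonneg_of_le (fun _ => by positivity) (fun k => h.norm_mul_pow_div_factorial_le k hr)
    ((summable_pow_div_factorial_rpow (by linarith) _).mul_left C)

theorem norm_tsum_le (hs : s < 1) (h : GevreyBound s C R a) {x r : ℝ} (hx : |x| ≤ r) :
    ‖∑' k, a k * (x : ℂ) ^ k / (k ! : ℂ)‖ ≤ C * ∑' k, (r / R) ^ k / (k ! : ℝ) ^ (1 - s) := by
  have hterm (k : ℕ) :
      ‖a k * (x : ℂ) ^ k / (k ! : ℂ)‖ ≤ C * ((r / R) ^ k / (k ! : ℝ) ^ (1 - s)) := by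
    have hnorm : ‖a k * (x : ℂ) ^ k / (k ! : ℂ)‖ = ‖a k‖ * |x| ^ k / k ! := by
      simp only [norm_div, norm_mul, norm_pow, Complex.norm_real, Complex.norm_natCast,
        Real.norm_eq_abs]
    rw [hnorm]
    calc ‖a k‖ * |x| ^ k / k ! ≤ ‖a k‖ * r ^ k / k ! := by gcongr
      _ ≤ _ := h.norm_mul_pow_div_factorial_le k ((abs_nonneg x).trans hx)
  have hmajorant :=
    (summable_pow_div_factorial_rpow (by linarith : 0 < 1 - s) (r / R)).mul_left C
  have hsummable := hmajorant.of_nonneg_of_le (fun _ => norm_nonneg _) hterm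
  calc ‖∑' k, a k * (x : ℂ) ^ k / (k ! : ℂ)‖ ≤ ∑' k, ‖a k * (x : ℂ) ^ k / (k ! : ℂ)‖ :=
        norm_tsum_le_tsum_norm hsummable
    _ ≤ ∑' k, C * ((r / R) ^ k / (k ! : ℝ) ^ (1 - s)) :=
        Summable.tsum_le_tsum hterm hsummable hmajorant
    _ = _ := tsum_mul_left

end GevreyBound

theorem gevrey_derivative_estimate_general (s C R L : ℝ) (hs0 : 0 ≤ s) (hs1 : s < 1)
    (hR : 0 < R) (a : ℕ → ℂ)
    (ha : ∀ k : ℕ, ‖a k‖ ≤ C * (Nat.factorial k : ℝ) ^ s / R ^ k) :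
    ∀ (m : ℕ) (x : ℝ), x ∈ Icc (-L) L →
      ‖iteratedDeriv m
          (fun x : ℝ => ∑' k : ℕ, a k * (x : ℂ) ^ k / (Nat.factorial k : ℂ)) x‖
        ≤ C * ((2 : ℝ) ^ s / R) ^ m * (Nat.factorial m : ℝ) ^ s *
            ∑' k : ℕ, ((2 : ℝ) ^ s * L / R) ^ k / (Nat.factorial k : ℝ) ^ (1 - s) := by
  intro m x hx
  have hgevrey : GevreyBound s C R a := ha
  rw [iteratedDeriv_tsum_mul_pow_div_factorial fun n _ hr =>
    (hgevrey.shift hs0 hR n).summable_norm_mul_pow_div_factorial hs1 hr]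
  simpa only [div_div_eq_mul_div, mul_comm L] using
    (hgevrey.shift hs0 hR m).norm_tsum_le hs1 (abs_le.mpr hx)

theorem gevrey_derivative_estimate (s C R L : ℝ) (hs0 : 0 ≤ s) (hs1 : s < 1)
    (hC : 0 < C) (hR : 0 < R) (hL : 0 < L) (a : ℕ → ℂ)
    (ha : ∀ k : ℕ, ‖a k‖ ≤ C * (Nat.factorial k : ℝ) ^ s / R ^ k) :
    ∀ (m : ℕ) (x : ℝ), x ∈ Icc (-L) L →
      ‖iteratedDeriv m
          (fun x : ℝ => ∑' k : ℕ, a k * (x : ℂ) ^ k / (Nat.factorial k : ℂ)) x‖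
        ≤ C * ((2 : ℝ) ^ s / R) ^ m * (Nat.factorial m : ℝ) ^ s *
            ∑' k : ℕ, ((2 : ℝ) ^ s * L / R) ^ k / (Nat.factorial k : ℝ) ^ (1 - s) :=
  gevrey_derivative_estimate_general s C R L hs0 hs1 hR a ha
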